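/- For every Set Cover instance (sets C_1,…,C_m ⊆ [n] with every element of [n] contained in at least one set) and every positive integer D: there is a capacity increase vector r : W → ℕ with Σ_w r(w) ≤ D·n such that the instance I(C_1,…,C_m) with capacities q + r admits a stable and perfect matching, if and only if there is a set cover of size at most D − 1 (a subfamily of at most D − 1 of the sets whose union is [n]). -/
import Mathlib


/-!
Basic framework for many-to-one matching (MM) instances with two-sided
preferences, following the paper "Optimal Capacity Modification for
Many-to-One Matching Problems".

Preference/priority orders are encoded by rank functions (`rkS`, `rkW`):
a smaller rank means more preferred; ranks are required to be injective
on the respective sets of acceptable partners.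
-/

structure MM (U W : Type*) [Fintype U] [Fintype W] [DecidableEq U] [DecidableEq W] where
  /-- acceptable schools of a student -/
  accS : U → Finset W
  /-- students on a school's priority list -/
  accW : W → Finset U
  /-- every student has a nonempty preference list -/
  acc_ne : ∀ u, (accS u).Nonempty
  /-- mutual acceptability -/
  acc_iff : ∀ u w, u ∈ accW w ↔ w ∈ accS u
  /-- rank of a school in a student's list (smaller = better) -/
  rkS : U → W → ℕ
  /-- rank of a student in a school's priority list (smaller = better) -/
  rkW : W → U → ℕ
  rkS_inj : ∀ u, ∀ w1 ∈ accS u, ∀ w2 ∈ accS u, rkS u w1 = rkS u w2 → w1 = w2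
  rkW_inj : ∀ w, ∀ u1 ∈ accW w, ∀ u2 ∈ accW w, rkW w u1 = rkW w u2 → u1 = u2
  /-- capacities -/
  q : W → ℕ
  q_pos : ∀ w, 1 ≤ q w

namespace MM

variable {U W : Type*} [Fintype U] [Fintype W] [DecidableEq U] [DecidableEq W]

/-- `μ` is a (partial) matching: it assigns only acceptable schools. -/
def IsMatching (I : MM U W) (μ : U → Option W) : Prop :=
  ∀ u w, μ u = some w → w ∈ I.accS u

/-- the set of students assigned to school `w` -/
def assignedTo (μ : U → Option W) (w : W) : Set U := {u | μ u = some w}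

/-- the number of students assigned to school `w` -/
noncomputable def load (μ : U → Option W) (w : W) : ℕ := (assignedTo μ w).ncard

/-- `μ` is feasible: it is a matching respecting all capacities. -/
def Feasible (I : MM U W) (μ : U → Option W) : Prop :=
  I.IsMatching μ ∧ ∀ w, load μ w ≤ I.q w

/-- `μ` is perfect: every student is matched. -/
def Perfect (μ : U → Option W) : Prop := ∀ u, μ u ≠ none

/-- student `u` strictly prefers school `w` to the outcome `o`
(where `o = none` means being unmatched) -/
def PrefOut (I : MM U W) (u : U) (w : W) (o : Option W) : Prop :=
  o = none ∨ ∃ w', o = some w' ∧ I.rkS u w < I.rkS u w'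

/-- `(u,w)` is a blocking pair of `μ` -/
def Blocks (I : MM U W) (μ : U → Option W) (u : U) (w : W) : Prop :=
  u ∈ I.accW w ∧ I.PrefOut u w (μ u) ∧
    (load μ w < I.q w ∨ ∃ u' ∈ assignedTo μ w, I.rkW w u < I.rkW w u')

/-- `μ` is stable: feasible and with no blocking pair -/
def Stable (I : MM U W) (μ : U → Option W) : Prop :=
  I.Feasible μ ∧ ∀ u w, ¬ I.Blocks μ u w

/-- student `u` is strictly better off under `μ` than under `σ` -/
def Better (I : MM U W) (u : U) (μ σ : U → Option W) : Prop :=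
  ∃ w, μ u = some w ∧ I.PrefOut u w (σ u)

/-- student `u` weakly prefers `μ` to `σ` -/
def WeakPref (I : MM U W) (u : U) (μ σ : U → Option W) : Prop :=
  μ u = σ u ∨ I.Better u μ σ

/-- `μ` dominates `σ` -/
def Dominates (I : MM U W) (μ σ : U → Option W) : Prop :=
  (∀ u, I.WeakPref u μ σ) ∧ ∃ u, I.Better u μ σ

/-- `μ` is (Pareto-)efficient: feasible and dominated by no feasible matching -/
def Efficient (I : MM U W) (μ : U → Option W) : Prop :=
  I.Feasible μ ∧ ∀ σ, I.Feasible σ → ¬ I.Dominates σ μ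

/-- `μ` is a student-optimal stable matching -/
def StudentOptimal (I : MM U W) (μ : U → Option W) : Prop :=
  I.Stable μ ∧ ∀ σ, I.Stable σ → ∀ u, I.WeakPref u μ σ

/-- increase capacities by the vector `r` -/
def incCap (I : MM U W) (r : W → ℕ) : MM U W :=
  { I with
    q := fun w => I.q w + r w
    q_pos := fun w => le_trans (I.q_pos w) (Nat.le_add_right _ _) }

/-- replace the capacities by `q'` -/
def withCap (I : MM U W) (q' : W → ℕ) (hq' : ∀ w, 1 ≤ q' w) : MM U W :=
  { I with
    q := q'
    q_pos := hq' }

/-- student `x` justifiedly envies student `y` under `σ` -/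
def JEnvy (I : MM U W) (σ : U → Option W) (x y : U) : Prop :=
  ∃ w, σ y = some w ∧ x ∈ I.accW w ∧ I.rkW w x < I.rkW w y ∧ I.PrefOut x w (σ x)

/-- the set of students unmatched under `μ` -/
def unmatchedSet (μ : U → Option W) : Set U := {u | μ u = none}

/-- `v` is an assignment vector: it assigns to each student unmatched
under `μhat` an acceptable school -/
def IsAsgVec (I : MM U W) (μhat : U → Option W) (v : U → W) : Prop :=
  ∀ u, μhat u = none → v u ∈ I.accS u

/-- `μhat + v` : additionally match every unmatched student `u` to `v u` -/
def extend (μhat : U → Option W) (v : U → W) : U → Option W :=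
  fun u => some ((μhat u).getD (v u))

/-- JE(v): the assigned students who justifiedly envy some unassigned student
under `μhat + v` -/
def JEset (I : MM U W) (μhat : U → Option W) (v : U → W) : Set U :=
  {x | μhat x ≠ none ∧ ∃ y, μhat y = none ∧ I.JEnvy (extend μhat v) x y}

/-- `n_je(v)` -/
noncomputable def nje (I : MM U W) (μhat : U → Option W) (v : U → W) : ℕ :=
  (I.JEset μhat v).ncard

end MM

section SetCover

/-!
The reduction of Theorem 3.3 (Claim 3.4): from a Set Cover instance
`C_1, …, C_m ⊆ [n]` (every element covered by some set) we build the MM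
instance `I(C_1, …, C_m)`.
-/

variable (n m : ℕ) (C : Fin m → Finset (Fin n))

/-- schools: a set-school `c_j` for each `j ∈ [m]` and a school `w_j^ℓ`
for each `j ∈ [m]`, `ℓ ∈ [n]` -/
abbrev SCSch := Fin m ⊕ (Fin m × Fin n)

/-- students: a dummy student `d_j` for each `j`, students `u_j^ℓ`, and an
element-student `e_i` for each `i ∈ [n]` -/
abbrev SCStu := Fin m ⊕ ((Fin m × Fin n) ⊕ Fin n)

def scAccS : SCStu n m → Finset (SCSch n m)
  | Sum.inl j => {Sum.inl j}
  | Sum.inr (Sum.inl p) => {Sum.inl p.1, Sum.inr p}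
  | Sum.inr (Sum.inr i) => (Finset.univ.filter (fun j => i ∈ C j)).image Sum.inl

def scRkS : SCStu n m → SCSch n m → ℕ
  | Sum.inl _, _ => 0
  | Sum.inr (Sum.inl _), Sum.inl _ => 0
  | Sum.inr (Sum.inl _), Sum.inr _ => 1
  | Sum.inr (Sum.inr _), Sum.inl j => j.val
  | Sum.inr (Sum.inr _), Sum.inr _ => 0

def scAccW : SCSch n m → Finset (SCStu n m)
  | Sum.inl j =>
      insert (Sum.inl j)
        ((Finset.univ.image (fun ℓ : Fin n => Sum.inr (Sum.inl (j, ℓ)))) ∪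
          (C j).image (fun i => Sum.inr (Sum.inr i)))
  | Sum.inr p => {Sum.inr (Sum.inl p)}

def scRkW : SCSch n m → SCStu n m → ℕ
  | Sum.inl _, Sum.inl _ => 0
  | Sum.inl _, Sum.inr (Sum.inl p) => 1 + p.2.val
  | Sum.inl _, Sum.inr (Sum.inr i) => 1 + n + i.val
  | Sum.inr _, _ => 0

/-- the instance `I(C_1, …, C_m)` of Theorem 3.3; all capacities are one -/
def ISC (hcov : ∀ i, ∃ j, i ∈ C j) : MM (SCStu n m) (SCSch n m) where
  accS := scAccS n m C
  accW := scAccW n m C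
  acc_ne := by
    rintro (j | p | i)
    · exact ⟨_, Finset.mem_singleton_self _⟩
    · exact ⟨_, Finset.mem_insert_self _ _⟩
    · obtain ⟨j, hj⟩ := hcov i
      exact ⟨Sum.inl j, by simp [scAccS, hj]⟩
  acc_iff := by
    rintro (j' | p' | i') (j | p) <;>
      simp [scAccS, scAccW, Prod.ext_iff, eq_comm] <;> aesop
  rkS := scRkS n m
  rkW := scRkW n m
  rkS_inj := by
    rintro (j' | p' | i') w1 h1 w2 h2 heq
    · simp only [scAccS, Finset.mem_singleton] at h1 h2; rw [h1, h2]
    · simp only [scAccS, Finset.mem_insert, Finset.mem_singleton] at h1 h2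
      rcases h1 with rfl | rfl <;> rcases h2 with rfl | rfl <;> simp_all [scRkS]
    · rcases w1 with j1 | p1 <;> rcases w2 with j2 | p2 <;>
        simp only [scAccS, Finset.mem_image, Finset.mem_filter] at h1 h2 <;>
        simp only [scRkS] at heq
      · exact congrArg Sum.inl (Fin.val_injective heq)
      · obtain ⟨a, _, ha⟩ := h2; exact absurd ha (by simp)
      · obtain ⟨a, _, ha⟩ := h1; exact absurd ha (by simp)
      · obtain ⟨a, _, ha⟩ := h1; exact absurd ha (by simp)
  rkW_inj := by
    rintro (j | p) u1 h1 u2 h2 heq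
    · simp only [scAccW, Finset.mem_insert, Finset.mem_union, Finset.mem_image,
        Finset.mem_univ, true_and] at h1 h2
      rcases h1 with rfl | ⟨ℓ1, rfl⟩ | ⟨i1, _, rfl⟩ <;>
        rcases h2 with rfl | ⟨ℓ2, rfl⟩ | ⟨i2, _, rfl⟩ <;>
        simp_all [scRkW] <;> omega
    · simp only [scAccW, Finset.mem_singleton] at h1 h2; rw [h1, h2]
  q := fun _ => 1
  q_pos := fun _ => le_rfl

lemma load_eq_card {U W : Type*} [Fintype U] [DecidableEq U] [DecidableEq W]
    (μ : U → Option W) (w : W) :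
    MM.load μ w = (Finset.univ.filter fun u => μ u = some w).card := by
  rw [MM.load, MM.assignedTo, Set.ncard_eq_toFinset_card', Set.toFinset_setOf]

/-- Claim 3.4: a total capacity increase of at most `D · n`
makes `I(C_1, …, C_m)` admit a stable and perfect matching iff there is a set
cover of size at most `D - 1`. -/
theorem statement_7 (hcov : ∀ i, ∃ j, i ∈ C j) (D : ℕ) (hD : 1 ≤ D) :
    (∃ r : SCSch n m → ℕ, (∑ w, r w) ≤ D * n ∧
      ∃ μ : SCStu n m → Option (SCSch n m),
        ((ISC n m C hcov).incCap r).Stable μ ∧ MM.Perfect μ) ↔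
    (∃ S : Finset (Fin m), S.card ≤ D - 1 ∧ ∀ i, ∃ j ∈ S, i ∈ C j) := by
  classical
  constructor
  · rintro ⟨r, hr, μ, ⟨⟨hmatch, hcap⟩, hstab⟩, hperf⟩
    -- dummy students are matched to their set-schools
    have hd : ∀ j, μ (Sum.inl j) = some (Sum.inl j) := by
      intro j
      obtain ⟨w, hw⟩ := Option.ne_none_iff_exists'.mp (hperf (Sum.inl j))
      have h2 := hmatch _ _ hw
      simp only [MM.incCap, ISC, scAccS, Finset.mem_singleton] at h2
      rw [hw, h2]
    -- element students are matched to set-schools of sets containing them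
    have he : ∀ i, ∃ j, μ (Sum.inr (Sum.inr i)) = some (Sum.inl j) ∧ i ∈ C j := by
      intro i
      obtain ⟨w, hw⟩ := Option.ne_none_iff_exists'.mp (hperf (Sum.inr (Sum.inr i)))
      have h2 := hmatch _ _ hw
      simp only [MM.incCap, ISC, scAccS, Finset.mem_image, Finset.mem_filter,
        Finset.mem_univ, true_and] at h2
      obtain ⟨j, hj, rfl⟩ := h2
      exact ⟨j, hw, hj⟩
    set S : Finset (Fin m) :=
      Finset.univ.filter (fun j => ∃ i, μ (Sum.inr (Sum.inr i)) = some (Sum.inl j)) with hSdef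
    refine ⟨S, ?_, fun i => ?_⟩
    · -- cardinality bound
      have key : ∀ j ∈ S, n + 1 ≤ r (Sum.inl j) := by
        intro j hj
        obtain ⟨i0, hi0⟩ := (Finset.mem_filter.mp hj).2
        -- all u_j^ℓ are matched to c_j
        have huj : ∀ ℓ, μ (Sum.inr (Sum.inl (j, ℓ))) = some (Sum.inl j) := by
          intro ℓ
          obtain ⟨w, hw⟩ := Option.ne_none_iff_exists'.mp (hperf (Sum.inr (Sum.inl (j, ℓ))))
          have h2 := hmatch _ _ hw
          simp only [MM.incCap, ISC, scAccS, Finset.mem_insert, Finset.mem_singleton] at h2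
          rcases h2 with rfl | rfl
          · exact hw
          · exfalso
            apply hstab (Sum.inr (Sum.inl (j, ℓ))) (Sum.inl j)
            refine ⟨?_, Or.inr ⟨Sum.inr (j, ℓ), hw, ?_⟩,
              Or.inr ⟨Sum.inr (Sum.inr i0), hi0, ?_⟩⟩
            · simp [MM.incCap, ISC, scAccW]
            · simp [MM.incCap, ISC, scRkS]
            · simp only [MM.incCap, ISC, scRkW]; omega
        have hload : n + 2 ≤ MM.load μ (Sum.inl j) := by
          rw [load_eq_card]
          have hsub : insert (Sum.inl j : SCStu n m)
              (insert (Sum.inr (Sum.inr i0) : SCStu n m)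
                ((Finset.univ : Finset (Fin n)).image
                  (fun ℓ => (Sum.inr (Sum.inl (j, ℓ)) : SCStu n m)))) ⊆
              Finset.univ.filter (fun u => μ u = some (Sum.inl j)) := by
            intro u hu'
            simp only [Finset.mem_insert, Finset.mem_image, Finset.mem_univ, true_and] at hu'
            rcases hu' with rfl | rfl | ⟨ℓ, rfl⟩
            · simp [hd j]
            · simp [hi0]
            · simp [huj ℓ]
          have hcard : (insert (Sum.inl j : SCStu n m)
              (insert (Sum.inr (Sum.inr i0) : SCStu n m)
                ((Finset.univ : Finset (Fin n)).image
                  (fun ℓ => (Sum.inr (Sum.inl (j, ℓ)) : SCStu n m))))).card = n + 2 := by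
            rw [Finset.card_insert_of_notMem (by simp),
              Finset.card_insert_of_notMem (by simp),
              Finset.card_image_of_injective _ (by intro a b h; simpa using h),
              Finset.card_univ, Fintype.card_fin]
          exact hcard ▸ Finset.card_le_card hsub
        have hq := hcap (Sum.inl j)
        simp only [MM.incCap, ISC] at hq
        omega
      have h1 : S.card * (n + 1) ≤ ∑ j ∈ S, r (Sum.inl j) := by
        calc S.card * (n + 1) = ∑ _j ∈ S, (n + 1) := by rw [Finset.sum_const, smul_eq_mul]
        _ ≤ ∑ j ∈ S, r (Sum.inl j) := Finset.sum_le_sum key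
      have h2 : ∑ j ∈ S, r (Sum.inl j) ≤ ∑ w, r w := by
        calc ∑ j ∈ S, r (Sum.inl j) = ∑ w ∈ S.image Sum.inl, r w :=
              (Finset.sum_image (by intro x _ y _ h; simpa using h)).symm
        _ ≤ ∑ w, r w := Finset.sum_le_sum_of_subset (Finset.subset_univ _)
      by_contra hcon
      push_neg at hcon
      have hDS : D ≤ S.card := by omega
      have h3 : D * (n + 1) ≤ S.card * (n + 1) := Nat.mul_le_mul_right _ hDS
      have h4 : D * (n + 1) = D * n + D := by ring
      omega
    · obtain ⟨j, hj, hij⟩ := he i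
      exact ⟨j, Finset.mem_filter.mpr ⟨Finset.mem_univ _, ⟨i, hj⟩⟩, hij⟩
  · rintro ⟨S, hScard, hScov⟩
    have hne : ∀ i : Fin n, (S.filter (fun j => i ∈ C j)).Nonempty := by
      intro i
      obtain ⟨j, hj, hij⟩ := hScov i
      exact ⟨j, Finset.mem_filter.mpr ⟨hj, hij⟩⟩
    set pick : Fin n → Fin m := fun i => (S.filter (fun j => i ∈ C j)).min' (hne i) with hpickdef
    have hpickS : ∀ i, pick i ∈ S := fun i =>
      (Finset.mem_filter.mp (Finset.min'_mem _ (hne i))).1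
    have hpickC : ∀ i, i ∈ C (pick i) := fun i =>
      (Finset.mem_filter.mp (Finset.min'_mem _ (hne i))).2
    have hpickmin : ∀ i j, j ∈ S → i ∈ C j → pick i ≤ j := fun i j hj hij =>
      Finset.min'_le _ _ (Finset.mem_filter.mpr ⟨hj, hij⟩)
    set cnt : Fin m → ℕ := fun j => (Finset.univ.filter fun i => pick i = j).card with hcntdef
    set r : SCSch n m → ℕ :=
      Sum.elim (fun j => if j ∈ S then n + cnt j else 0) (fun _ => 0) with hrdef
    set μ : SCStu n m → Option (SCSch n m) :=
      Sum.elim (fun j => some (Sum.inl j))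
        (Sum.elim (fun p => if p.1 ∈ S then some (Sum.inl p.1) else some (Sum.inr p))
          (fun i => some (Sum.inl (pick i)))) with hμdef
    -- characterization of who is matched to c_j for j ∉ S
    have hAss : ∀ j, j ∉ S → ∀ u, μ u = some (Sum.inl j) → u = Sum.inl j := by
      intro j hj u hu
      rcases u with j' | p | i
      · simp only [hμdef, Sum.elim_inl, Option.some.injEq, Sum.inl.injEq] at hu
        rw [hu]
      · simp only [hμdef, Sum.elim_inr, Sum.elim_inl] at hu
        split at hu
        · simp only [Option.some.injEq, Sum.inl.injEq] at hu
          exact absurd (hu ▸ ‹p.1 ∈ S›) hj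
        · simp at hu
      · simp only [hμdef, Sum.elim_inr, Option.some.injEq, Sum.inl.injEq] at hu
        exact absurd (hu ▸ hpickS i) hj
    refine ⟨r, ?_, μ, ⟨⟨?_, ?_⟩, ?_⟩, ?_⟩
    · -- sum of capacity increases
      rw [Fintype.sum_sum_type]
      simp only [hrdef, Sum.elim_inl, Sum.elim_inr, Finset.sum_const_zero, add_zero]
      rw [Finset.sum_ite_mem, Finset.univ_inter, Finset.sum_add_distrib,
        Finset.sum_const, smul_eq_mul]
      have hfib : ∑ j ∈ S, cnt j = n := by
        have h := Finset.card_eq_sum_card_fiberwise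
          (f := pick) (s := Finset.univ) (t := S) (fun i _ => hpickS i)
        simp only [Finset.card_univ, Fintype.card_fin] at h
        exact h.symm
      rw [hfib]
      obtain ⟨D', rfl⟩ : ∃ D', D = D' + 1 := ⟨D - 1, by omega⟩
      have h1 : S.card ≤ D' := by omega
      have h2 : S.card * n ≤ D' * n := Nat.mul_le_mul_right _ h1
      have h3 : (D' + 1) * n = D' * n + n := by ring
      omega
    · -- IsMatching
      intro u w hw
      rcases u with j' | p | i
      · simp only [hμdef, Sum.elim_inl, Option.some.injEq] at hw
        subst hw
        simp [MM.incCap, ISC, scAccS]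
      · simp only [hμdef, Sum.elim_inr, Sum.elim_inl] at hw
        simp only [MM.incCap, ISC, scAccS, Finset.mem_insert, Finset.mem_singleton]
        split at hw <;> simp only [Option.some.injEq] at hw <;> subst hw
        · exact Or.inl rfl
        · exact Or.inr rfl
      · simp only [hμdef, Sum.elim_inr, Option.some.injEq] at hw
        subst hw
        simp only [MM.incCap, ISC, scAccS, Finset.mem_image, Finset.mem_filter,
          Finset.mem_univ, true_and]
        exact ⟨pick i, hpickC i, rfl⟩
    · -- capacities
      intro w
      rcases w with j | p
      · by_cases hjS : j ∈ S
        · set A : Finset (SCStu n m) :=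
            (Finset.univ : Finset (Fin n)).image
              (fun ℓ => (Sum.inr (Sum.inl (j, ℓ)) : SCStu n m)) with hAdef
          set B : Finset (SCStu n m) :=
            (Finset.univ.filter fun i => pick i = j).image
              (fun i => (Sum.inr (Sum.inr i) : SCStu n m)) with hBdef
          have hsub : Finset.univ.filter (fun u => μ u = some (Sum.inl j)) ⊆
              insert (Sum.inl j : SCStu n m) (A ∪ B) := by
            intro u hu
            simp only [Finset.mem_filter, Finset.mem_univ, true_and] at hu
            rcases u with j' | p | i
            · simp only [hμdef, Sum.elim_inl, Option.some.injEq, Sum.inl.injEq] at hu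
              subst hu; exact Finset.mem_insert_self _ _
            · simp only [hμdef, Sum.elim_inr, Sum.elim_inl] at hu
              split at hu
              · simp only [Option.some.injEq, Sum.inl.injEq] at hu
                refine Finset.mem_insert_of_mem (Finset.mem_union_left _ ?_)
                simp only [hAdef, Finset.mem_image, Finset.mem_univ, true_and]
                exact ⟨p.2, by rw [← hu]⟩
              · simp at hu
            · simp only [hμdef, Sum.elim_inr, Option.some.injEq, Sum.inl.injEq] at hu
              refine Finset.mem_insert_of_mem (Finset.mem_union_right _ ?_)
              simp only [hBdef, Finset.mem_image, Finset.mem_filter, Finset.mem_univ,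
                true_and]
              exact ⟨i, hu, rfl⟩
          have hb : (insert (Sum.inl j : SCStu n m) (A ∪ B)).card ≤ 1 + (n + cnt j) := by
            refine le_trans (Finset.card_insert_le _ _) ?_
            have h1 := Finset.card_union_le A B
            have hA : A.card = n := by
              rw [hAdef, Finset.card_image_of_injective _ (by intro a b h; simpa using h),
                Finset.card_univ, Fintype.card_fin]
            have hB : B.card ≤ cnt j := by
              rw [hBdef]; exact le_trans Finset.card_image_le le_rfl
            omega
          have hqv : ((ISC n m C hcov).incCap r).q (Sum.inl j) = 1 + (n + cnt j) := by
            simp [MM.incCap, ISC, hrdef, hjS]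
          rw [load_eq_card, hqv]
          exact le_trans (Finset.card_le_card hsub) hb
        · have hsub : Finset.univ.filter (fun u => μ u = some (Sum.inl j)) ⊆
              {(Sum.inl j : SCStu n m)} := by
            intro u hu
            simp only [Finset.mem_filter, Finset.mem_univ, true_and] at hu
            simp [hAss j hjS u hu]
          rw [load_eq_card]
          have h1 := Finset.card_le_card hsub
          simp only [Finset.card_singleton] at h1
          have hqv : 1 ≤ ((ISC n m C hcov).incCap r).q (Sum.inl j) :=
            ((ISC n m C hcov).incCap r).q_pos _
          omega
      · have hsub : Finset.univ.filter (fun u => μ u = some (Sum.inr p)) ⊆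
            {(Sum.inr (Sum.inl p) : SCStu n m)} := by
          intro u hu
          simp only [Finset.mem_filter, Finset.mem_univ, true_and] at hu
          rcases u with j' | p' | i
          · simp [hμdef] at hu
          · simp only [hμdef, Sum.elim_inr, Sum.elim_inl] at hu
            split at hu
            · simp at hu
            · simp only [Option.some.injEq, Sum.inr.injEq] at hu
              simp [hu]
          · simp [hμdef] at hu
        rw [load_eq_card]
        have h1 := Finset.card_le_card hsub
        simp only [Finset.card_singleton] at h1
        have hqv : 1 ≤ ((ISC n m C hcov).incCap r).q (Sum.inr p) :=
          ((ISC n m C hcov).incCap r).q_pos _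
        omega
    · -- no blocking pairs
      intro u w hb
      obtain ⟨hacc, hpref, hblk⟩ := hb
      -- reusable: refuting a block at c_j for j ∉ S by a student of positive rank
      have hrefute : ∀ j, j ∉ S → ∀ u₀ : SCStu n m,
          0 < ((ISC n m C hcov).incCap r).rkW (Sum.inl j) u₀ →
          ¬ (MM.load μ (Sum.inl j) < ((ISC n m C hcov).incCap r).q (Sum.inl j) ∨
            ∃ u' ∈ MM.assignedTo μ (Sum.inl j),
              ((ISC n m C hcov).incCap r).rkW (Sum.inl j) u₀ <
                ((ISC n m C hcov).incCap r).rkW (Sum.inl j) u') := by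
        intro j hjS u₀ hpos hblk'
        rcases hblk' with hlt2 | ⟨u', hu', hlt2⟩
        · have h1 : Sum.inl j ∈ MM.assignedTo μ (Sum.inl j) := by
            show μ (Sum.inl j) = some (Sum.inl j)
            simp [hμdef]
          have h2 : 0 < MM.load μ (Sum.inl j) :=
            (Set.ncard_pos (Set.toFinite _)).mpr ⟨_, h1⟩
          have hqv : ((ISC n m C hcov).incCap r).q (Sum.inl j) = 1 := by
            simp [MM.incCap, ISC, hrdef, hjS]
          omega
        · have hu'' : μ u' = some (Sum.inl j) := hu'
          rw [hAss j hjS u' hu''] at hlt2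
          simp only [MM.incCap, ISC, scRkW] at hlt2
          omega
      rcases w with j | p
      · simp only [MM.incCap, ISC, scAccW, Finset.mem_insert, Finset.mem_union,
          Finset.mem_image, Finset.mem_univ, true_and] at hacc
        rcases hacc with rfl | ⟨ℓ, rfl⟩ | ⟨i, hiC, rfl⟩
        · -- u = d_j : it is matched to its top choice
          rcases hpref with h | ⟨w', hw', hlt⟩
          · simp [hμdef] at h
          · simp only [hμdef, Sum.elim_inl, Option.some.injEq] at hw'
            subst hw'
            simp [MM.incCap, ISC, scRkS] at hlt
        · -- u = u_j^ℓ
          rcases hpref with h | ⟨w', hw', hlt⟩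
          · simp only [hμdef, Sum.elim_inr, Sum.elim_inl] at h
            split at h <;> simp at h
          · by_cases hjS : j ∈ S
            · simp only [hμdef, Sum.elim_inr, Sum.elim_inl, if_pos hjS,
                Option.some.injEq] at hw'
              subst hw'
              simp [MM.incCap, ISC, scRkS] at hlt
            · exact hrefute j hjS _ (by simp [MM.incCap, ISC, scRkW]) hblk
        · -- u = e_i
          rcases hpref with h | ⟨w', hw', hlt⟩
          · simp [hμdef] at h
          · simp only [hμdef, Sum.elim_inr, Option.some.injEq] at hw'
            subst hw'
            simp only [MM.incCap, ISC, scRkS] at hlt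
            have hjS : j ∉ S := by
              intro hjS
              have h4 := Fin.le_def.mp (hpickmin i j hjS hiC)
              omega
            exact hrefute j hjS _ (by simp [MM.incCap, ISC, scRkW]) hblk
      · -- w = w_j^ℓ : only u_j^ℓ is acceptable and it never prefers w to its match
        simp only [MM.incCap, ISC, scAccW, Finset.mem_singleton] at hacc
        subst hacc
        rcases hpref with h | ⟨w', hw', hlt⟩
        · simp only [hμdef, Sum.elim_inr, Sum.elim_inl] at h
          split at h <;> simp at h
        · simp only [hμdef, Sum.elim_inr, Sum.elim_inl] at hw'
          split at hw' <;> simp only [Option.some.injEq] at hw' <;> subst hw' <;>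
            simp [MM.incCap, ISC, scRkS] at hlt
    · -- perfect
      intro u
      rcases u with j | p | i
      · simp [hμdef]
      · simp only [hμdef, Sum.elim_inr, Sum.elim_inl]
        split <;> simp
      · simp [hμdef]

end SetCover
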